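/- arXiv:2308.13698 — 2 statements merged into one kernel-verified Lean document; each statement's English description precedes it below -/
import Mathlib

section
/- For $\mathrm{Re}(b)>\mathrm{Re}(a)>0$, the expansion ${}_{1}F_{2}(a;b,c;z) = \sum_{k=0}^{\infty} \frac{(-1)^k (b-a)_k}{(b)_k (c)_k\, k!}\, z^k\, {}_{0}F_{1}(-;c+k;z)$ holds for all complex $z$. -/
open Complex MeasureTheory intervalIntegral Finset

noncomputable def poch (a : ℂ) (k : ℕ) : ℂ := ∏ i ∈ Finset.range k, (a + i)

noncomputable def F01 (c z : ℂ) : ℂ :=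
  ∑' k : ℕ, 1 / (poch c k * (Nat.factorial k : ℂ)) * z ^ k

noncomputable def F02 (b c z : ℂ) : ℂ :=
  ∑' k : ℕ, 1 / (poch b k * poch c k * (Nat.factorial k : ℂ)) * z ^ k

noncomputable def F12 (a b c z : ℂ) : ℂ :=
  ∑' k : ℕ, poch a k / (poch b k * poch c k * (Nat.factorial k : ℂ)) * z ^ k

noncomputable def F22 (a b c d z : ℂ) : ℂ :=
  ∑' k : ℕ, poch a k * poch b k / (poch c k * poch d k * (Nat.factorial k : ℂ)) * z ^ k

noncomputable def F32 (a b c d e z : ℂ) : ℂ :=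
  ∑' k : ℕ, poch a k * poch b k * poch c k / (poch d k * poch e k * (Nat.factorial k : ℂ)) * z ^ k

noncomputable def F23 (a b c d e z : ℂ) : ℂ :=
  ∑' k : ℕ, poch a k * poch b k / (poch c k * poch d k * poch e k * (Nat.factorial k : ℂ)) * z ^ k

noncomputable def Bate (n : ℕ) (α β z : ℂ) : ℂ :=
  ∑ k ∈ Finset.range (n+1),
    (-1 : ℂ) ^ k * (Nat.factorial n : ℂ) /
      ((Nat.factorial k : ℂ) * (Nat.factorial (n - k) : ℂ) * poch (α+1) k * poch (β+1) k) * z ^ k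

/-!
Expanding each ${}_0F_1(-;c+k;z)$ turns the right-hand side into a double series in $(k, j)$.
When $b$ and $c$ avoid the nonpositive integers it converges absolutely: for suitable
$R, \varepsilon > 0$ we have $|(b-a)_k / (b)_k| \le R^k$ and $|(c)_n| \ge \varepsilon^n$, so its
terms are dominated by $(R|z|/\varepsilon)^k/k! \cdot (|z|/\varepsilon)^j/j!$. Summing along the
diagonals $k + j = n$ and using $(b)_n = (b)_k (b+k)_j$, $(c)_n = (c)_k (c+k)_j$ and
$n! = \binom nk k!\, j!$, the coefficient of $z^n$ is
$\frac{1}{(b)_n (c)_n n!} \sum_k (-1)^k \binom nk (b-a)_k (b+k)_{n-k}$, and the sum is $(a)_n$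
by the Chu–Vandermonde identity.
-/

open scoped Nat

lemma poch_add (a : ℂ) (m n : ℕ) : poch a (m + n) = poch a m * poch (a + m) n := by
  rw [poch, poch, poch, prod_range_add]
  congr 1
  exact prod_congr rfl fun i _ => by push_cast; ring

lemma poch_ne_zero {c : ℂ} (hc : ∀ n : ℕ, c ≠ -n) (k : ℕ) : poch c k ≠ 0 :=
  prod_ne_zero_iff.mpr fun i _ h => hc i (eq_neg_of_add_eq_zero_left h)

lemma add_natCast_ne_neg_natCast {c : ℂ} (hc : ∀ n : ℕ, c ≠ -n) (k : ℕ) :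
    ∀ n : ℕ, c + k ≠ -n :=
  fun n h => hc (k + n) (by push_cast; linear_combination h)

lemma exists_pos_forall_le_norm_add_natCast {c : ℂ} (hc : ∀ n : ℕ, c ≠ -n) :
    ∃ ε > 0, ∀ i : ℕ, ε ≤ ‖c + i‖ := by
  have htends : Filter.Tendsto (fun i : ℕ => ‖c + i‖) Filter.cofinite Filter.atTop := by
    rw [Nat.cofinite_eq_atTop]
    refine Filter.tendsto_atTop_mono (fun i => ?_)
      (Filter.tendsto_atTop_add_const_right _ (-‖c‖) tendsto_natCast_atTop_atTop)
    simpa [add_comm, ← sub_eq_add_neg] using norm_sub_norm_le (i : ℂ) (-c)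
  obtain ⟨i₀, hi₀⟩ := htends.exists_forall_le
  exact ⟨_, norm_pos_iff.mpr fun h => hc i₀ (eq_neg_of_add_eq_zero_left h), hi₀⟩

lemma norm_poch_le_pow_mul {x y : ℂ} {C : ℝ} (h : ∀ i : ℕ, ‖x + i‖ ≤ C * ‖y + i‖) (n : ℕ) :
    ‖poch x n‖ ≤ C ^ n * ‖poch y n‖ := by
  simp only [poch, norm_prod, pow_eq_prod_const, ← prod_mul_distrib]
  exact prod_le_prod (fun _ _ => norm_nonneg _) fun i _ => h i

lemma pow_le_norm_poch {c : ℂ} {ε : ℝ} (hε : 0 ≤ ε) (h : ∀ i : ℕ, ε ≤ ‖c + i‖) (n : ℕ) :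
    ε ^ n ≤ ‖poch c n‖ := by
  simp only [poch, norm_prod, pow_eq_prod_const]
  exact prod_le_prod (fun _ _ => hε) fun i _ => h i

lemma descPochhammer_smeval_eq_prod {R : Type*} [CommRing R] (r : R) (n : ℕ) :
    (descPochhammer ℤ n).smeval r = ∏ j ∈ range n, (r - j) := by
  rw [← Polynomial.aeval_eq_smeval, Polynomial.aeval_def, Polynomial.eval₂_eq_eval_map,
    descPochhammer_map, descPochhammer_eval_eq_prod_range]

lemma descPochhammer_smeval_eq_poch (a : ℂ) (n : ℕ) :
    (descPochhammer ℤ n).smeval (a + n - 1) = poch a n := by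
  rw [descPochhammer_smeval_eq_prod, poch, ← prod_range_reflect]
  refine prod_congr rfl fun j hj => ?_
  have := mem_range.mp hj
  rw [Nat.cast_sub (by omega), Nat.cast_sub (by omega)]
  push_cast; ring

lemma descPochhammer_smeval_neg (x : ℂ) (n : ℕ) :
    (descPochhammer ℤ n).smeval (-x) = (-1) ^ n * poch x n := by
  rw [descPochhammer_smeval_eq_prod, poch, pow_eq_prod_const, ← prod_mul_distrib]
  exact prod_congr rfl fun j _ => by ring

/-- Chu–Vandermonde for descending Pochhammer symbols at `-x` and `b + n - 1`. -/
theorem poch_sub_eq_sum_antidiagonal (x b : ℂ) (n : ℕ) :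
    poch (b - x) n = ∑ p ∈ antidiagonal n,
      n.choose p.1 * ((-1) ^ p.1 * poch x p.1 * poch (b + p.1) p.2) := by
  have key := Ring.descPochhammer_smeval_add n (Commute.all (-x) (b + n - 1))
  rw [show -x + (b + n - 1) = b - x + n - 1 by ring, descPochhammer_smeval_eq_poch] at key
  rw [key]
  refine sum_congr rfl fun p hp => ?_
  have hn : (n : ℂ) = p.1 + p.2 := by rw [← mem_antidiagonal.mp hp]; push_cast; ring
  rw [descPochhammer_smeval_neg, hn, show b + (p.1 + p.2 : ℂ) - 1 = b + p.1 + p.2 - 1 by ring,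
    descPochhammer_smeval_eq_poch, mul_assoc]

theorem tsum_eq_tsum_sum_antidiagonal {A α : Type*} [AddCommMonoid A] [HasAntidiagonal A]
    [AddCommMonoid α] [TopologicalSpace α] [ContinuousAdd α] [T3Space α] {f : A × A → α}
    (hf : Summable f) : ∑' p, f p = ∑' n, ∑ p ∈ antidiagonal n, f p := by
  rw [← HasAntidiagonal.sigmaAntidiagonalEquivProd.tsum_eq]
  refine (Summable.tsum_sigma' (fun n => Summable.of_finite)
    (HasAntidiagonal.sigmaAntidiagonalEquivProd.summable_iff.mpr hf)).trans ?_
  congr with n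
  rw [← Finset.tsum_subtype]
  rfl

noncomputable def expansionTerm (a b c z : ℂ) (p : ℕ × ℕ) : ℂ :=
  (-1) ^ p.1 * poch (b - a) p.1 / (poch b p.1 * poch c p.1 * p.1 !) * z ^ p.1 *
    (1 / (poch (c + p.1) p.2 * p.2 !) * z ^ p.2)

theorem summable_expansionTerm (a z : ℂ) {b c : ℂ} (hb : ∀ n : ℕ, b ≠ -n)
    (hc : ∀ n : ℕ, c ≠ -n) : Summable (expansionTerm a b c z) := by
  obtain ⟨εb, hεb, hb_le⟩ := exists_pos_forall_le_norm_add_natCast hb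
  obtain ⟨εc, hεc, hc_le⟩ := exists_pos_forall_le_norm_add_natCast hc
  set R := 1 + ‖a‖ / εb
  have hratio (k : ℕ) : ‖poch (b - a) k‖ / ‖poch b k‖ ≤ R ^ k := by
    rw [div_le_iff₀ (norm_pos_iff.mpr (poch_ne_zero hb k))]
    refine norm_poch_le_pow_mul (fun i => ?_) k
    calc ‖b - a + i‖ ≤ ‖b + i‖ + ‖a‖ := by
          rw [show b - a + i = b + i - a by ring]; exact norm_sub_le _ _
      _ ≤ ‖b + i‖ + ‖a‖ / εb * ‖b + i‖ := by
          gcongr; rw [div_mul_eq_mul_div, le_div_iff₀ hεb]; gcongr; exact hb_le i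
      _ = R * ‖b + i‖ := by ring
  have hc_shift_le (k i : ℕ) : εc ≤ ‖c + k + i‖ := by
    simpa [add_assoc] using hc_le (k + i)
  refine Summable.of_norm_bounded ((Real.summable_pow_div_factorial (R * ‖z‖ / εc)).mul_of_nonneg
    (Real.summable_pow_div_factorial (‖z‖ / εc)) (fun _ => by positivity) (fun _ => by positivity))
    fun ⟨k, j⟩ => ?_
  calc ‖expansionTerm a b c z (k, j)‖
      = ‖poch (b - a) k‖ / ‖poch b k‖ * (‖z‖ ^ k / (‖poch c k‖ * k !)) *
          (‖z‖ ^ j / (‖poch (c + k) j‖ * j !)) := by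
        simp only [expansionTerm, norm_mul, norm_div, norm_pow, norm_neg, norm_one, one_pow,
          Complex.norm_natCast]
        ring
    _ ≤ R ^ k * (‖z‖ ^ k / (εc ^ k * k !)) * (‖z‖ ^ j / (εc ^ j * j !)) := by
        gcongr
        · exact hratio k
        · exact pow_le_norm_poch hεc.le hc_le k
        · exact pow_le_norm_poch hεc.le (hc_shift_le k) j
    _ = (R * ‖z‖ / εc) ^ k / k ! * ((‖z‖ / εc) ^ j / j !) := by
        rw [div_pow, mul_pow, div_pow]; ring

theorem tsum_mul_F01_eq_tsum_expansionTerm (a z : ℂ) {b c : ℂ} (hb : ∀ n : ℕ, b ≠ -n)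
    (hc : ∀ n : ℕ, c ≠ -n) :
    ∑' k : ℕ, (-1 : ℂ) ^ k * poch (b - a) k / (poch b k * poch c k * k !) * z ^ k *
      F01 (c + k) z = ∑' p, expansionTerm a b c z p := by
  have hs := summable_expansionTerm a z hb hc
  rw [hs.tsum_prod' hs.prod_factor]
  congr with k
  rw [F01, ← tsum_mul_left]
  rfl

theorem sum_antidiagonal_expansionTerm (a c z : ℂ) {b : ℂ} (hb : ∀ n : ℕ, b ≠ -n) (n : ℕ) :
    ∑ p ∈ antidiagonal n, expansionTerm a b c z p =
      poch a n / (poch b n * poch c n * n !) * z ^ n := by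
  rw [show poch a n = poch (b - (b - a)) n by rw [sub_sub_cancel], poch_sub_eq_sum_antidiagonal,
    sum_div, sum_mul]
  refine sum_congr rfl fun ⟨k, j⟩ hkj => ?_
  obtain rfl : k + j = n := mem_antidiagonal.mp hkj
  have hbk := poch_ne_zero hb k
  have hbkj := poch_ne_zero (add_natCast_ne_neg_natCast hb k) j
  have hchoose : ((k + j).choose k : ℂ) ≠ 0 := by
    exact_mod_cast (Nat.choose_pos (Nat.le_add_right k j)).ne'
  rw [poch_add b, poch_add c, pow_add,
    ← Nat.choose_mul_factorial_mul_factorial (Nat.le_add_right k j), Nat.add_sub_cancel_left]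
  simp only [expansionTerm]
  push_cast
  field_simp

theorem F12_eq_tsum_mul_F01 (a z : ℂ) {b c : ℂ} (hb : ∀ n : ℕ, b ≠ -n) (hc : ∀ n : ℕ, c ≠ -n) :
    F12 a b c z = ∑' k : ℕ, (-1 : ℂ) ^ k * poch (b - a) k / (poch b k * poch c k * k !) *
      z ^ k * F01 (c + k) z := by
  rw [tsum_mul_F01_eq_tsum_expansionTerm a z hb hc,
    tsum_eq_tsum_sum_antidiagonal (summable_expansionTerm a z hb hc), F12]
  exact tsum_congr fun n => (sum_antidiagonal_expansionTerm a c z hb n).symm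

theorem oneF2_expansion_zeroF1 (a b c z : ℂ)
    (ha : 0 < a.re) (hab : a.re < b.re) (hc : ∀ n : ℕ, c ≠ -n) :
    F12 a b c z =
      ∑' k : ℕ, (-1 : ℂ) ^ k * poch (b - a) k /
          (poch b k * poch c k * (Nat.factorial k : ℂ)) * z ^ k *
          F01 (c + k) z := by
  refine F12_eq_tsum_mul_F01 a z (fun n hn => ?_) hc
  have hre : b.re = -n := by simp [hn]
  linarith [n.cast_nonneg (α := ℝ)]
end

section
/- The inversion formula $z^n = (\alpha+1)_n(\beta+1)_n \sum_{k=0}^{n} \binom{n}{k}(-1)^k B_k^{\alpha,\beta}(z)$ holds for every nonnegative integer $n$ and all complex $z$. -/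
open Complex MeasureTheory intervalIntegral Finset

lemma poch_ne_zero_s18 (a : ℂ) (h : ∀ m : ℕ, a ≠ -m) (k : ℕ) : poch a k ≠ 0 := by
  unfold poch
  refine Finset.prod_ne_zero_iff.2 fun i _ => ?_
  intro hz
  exact h i (by linear_combination hz)

lemma alt_sum (m : ℕ) :
    ∑ i ∈ range (m+1), (-1:ℂ)^i * (m.choose i : ℂ) = if m = 0 then 1 else 0 := by
  have h := Int.alternating_sum_range_choose (n := m)
  have : ((∑ i ∈ range (m+1), (-1:ℤ)^i * (m.choose i : ℤ) : ℤ) : ℂ)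
      = ∑ i ∈ range (m+1), (-1:ℂ)^i * (m.choose i : ℂ) := by push_cast [mul_comm]; ring_nf
  rw [← this, h]
  split_ifs <;> simp

lemma key (n j : ℕ) (hj : j ≤ n) :
    ∑ k ∈ range (n+1), (-1:ℂ)^k * (n.choose k : ℂ) * (k.choose j : ℂ)
      = if j = n then (-1:ℂ)^n else 0 := by
  rw [Finset.range_eq_Ico, ← Finset.sum_Ico_consecutive _ (Nat.zero_le j) (by omega)]
  have h1 : ∑ k ∈ Finset.Ico 0 j, (-1:ℂ)^k * (n.choose k : ℂ) * (k.choose j : ℂ) = 0 := by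
    refine Finset.sum_eq_zero fun k hk => ?_
    rw [Nat.choose_eq_zero_of_lt (Finset.mem_Ico.1 hk).2]
    simp
  rw [h1, zero_add, Finset.sum_Ico_eq_sum_range]
  have h2 : n + 1 - j = (n - j) + 1 := by omega
  rw [h2]
  have h3 : ∀ i ∈ range ((n-j)+1),
      (-1:ℂ)^(j+i) * (n.choose (j+i) : ℂ) * ((j+i).choose j : ℂ)
        = ((-1:ℂ)^j * (n.choose j : ℂ)) * ((-1:ℂ)^i * ((n-j).choose i : ℂ)) := by
    intro i hi
    have hi' : i ≤ n - j := by simpa using Nat.lt_succ_iff.1 (Finset.mem_range.1 hi)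
    have := Nat.choose_mul (n := n) (k := j+i) (s := j) (by omega)
    have hc : (n.choose (j+i) : ℂ) * ((j+i).choose j : ℂ)
        = (n.choose j : ℂ) * ((n-j).choose i : ℂ) := by
      have h4 : j + i - j = i := by omega
      rw_mod_cast [this, h4]
    rw [pow_add]
    linear_combination (-1:ℂ)^(j) * (-1:ℂ)^i * hc
  rw [Finset.sum_congr rfl h3, ← Finset.mul_sum, alt_sum]
  rcases eq_or_ne j n with rfl | hne
  · simp
  · have : n - j ≠ 0 := by omega
    simp [this, hne]

lemma bate_eq (α β z : ℂ) (hpa : ∀ m, poch (α+1) m ≠ 0) (hpb : ∀ m, poch (β+1) m ≠ 0)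
    (k N : ℕ) (hk : k ≤ N) :
    Bate k α β z = ∑ j ∈ range (N+1),
      (-1:ℂ)^j * (k.choose j : ℂ) / (poch (α+1) j * poch (β+1) j) * z^j := by
  unfold Bate
  have hterm : ∀ j ∈ range (k+1),
      (-1 : ℂ) ^ j * (Nat.factorial k : ℂ) /
        ((Nat.factorial j : ℂ) * (Nat.factorial (k - j) : ℂ) * poch (α+1) j * poch (β+1) j) * z ^ j
      = (-1:ℂ)^j * (k.choose j : ℂ) / (poch (α+1) j * poch (β+1) j) * z^j := by
    intro j hj
    have hjk : j ≤ k := Nat.lt_succ_iff.1 (Finset.mem_range.1 hj)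
    have hf : (k.factorial : ℂ) = (k.choose j : ℂ) * (j.factorial : ℂ) * ((k-j).factorial : ℂ) := by
      exact_mod_cast (Nat.choose_mul_factorial_mul_factorial hjk).symm
    have h1 : (j.factorial : ℂ) ≠ 0 := Nat.cast_ne_zero.2 j.factorial_ne_zero
    have h2 : ((k-j).factorial : ℂ) ≠ 0 := Nat.cast_ne_zero.2 (k-j).factorial_ne_zero
    have h3 := hpa j
    have h4 := hpb j
    rw [hf]
    field_simp
  rw [Finset.sum_congr rfl hterm]
  refine Finset.sum_subset (Finset.range_subset_range.2 (by omega)) fun j _ hj' => ?_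
  have : k < j := by
    simp only [Finset.mem_range, not_lt] at hj'
    omega
  rw [Nat.choose_eq_zero_of_lt this]
  simp

theorem bateman_inversion (alpha beta : ℂ) (n : ℕ)
    (ha : ∀ m : ℕ, alpha + 1 ≠ -m) (hb : ∀ m : ℕ, beta + 1 ≠ -m) :
    ∀ z : ℂ,
      z ^ n = poch (alpha + 1) n * poch (beta + 1) n *
        ∑ k ∈ Finset.range (n + 1),
          (Nat.choose n k : ℂ) * (-1 : ℂ) ^ k * Bate k alpha beta z := by
  intro z
  have hpa : ∀ m, poch (alpha+1) m ≠ 0 := poch_ne_zero_s18 _ ha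
  have hpb : ∀ m, poch (beta+1) m ≠ 0 := poch_ne_zero_s18 _ hb
  have step : ∑ k ∈ range (n+1), (n.choose k : ℂ) * (-1:ℂ)^k * Bate k alpha beta z
      = z^n / (poch (alpha+1) n * poch (beta+1) n) := by
    rw [Finset.sum_congr rfl (fun k hk => by
      rw [bate_eq alpha beta z hpa hpb k n (Nat.lt_succ_iff.1 (Finset.mem_range.1 hk))])]
    simp only [Finset.mul_sum]
    rw [Finset.sum_comm]
    have hin : ∀ j ∈ range (n+1),
        (∑ k ∈ range (n+1), (n.choose k : ℂ) * (-1:ℂ)^k *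
          ((-1:ℂ)^j * (k.choose j : ℂ) / (poch (alpha+1) j * poch (beta+1) j) * z^j))
        = (if j = n then (-1:ℂ)^n else 0) *
            ((-1:ℂ)^j / (poch (alpha+1) j * poch (beta+1) j) * z^j) := by
      intro j hj
      rw [← key n j (Nat.lt_succ_iff.1 (Finset.mem_range.1 hj)), Finset.sum_mul]
      refine Finset.sum_congr rfl fun k _ => ?_
      ring
    rw [Finset.sum_congr rfl hin]
    simp only [ite_mul, zero_mul]
    rw [Finset.sum_ite_eq' (range (n+1)) n]
    simp only [Finset.mem_range, Nat.lt_succ_self, if_true]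
    have hsq : (-1:ℂ)^n * (-1:ℂ)^n = 1 := by rw [← mul_pow]; norm_num
    have h3 := hpa n
    have h4 := hpb n
    field_simp
    linear_combination z^n * hsq
  rw [step]
  have h3 := hpa n
  have h4 := hpb n
  field_simp
end
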